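/- arXiv:1602.08922 — 3 statements merged into one kernel-verified Lean document; each statement's English description precedes it below -/
import Mathlib

section
/- Let p be an odd prime, α ≥ 2 an integer, b an integer, and m an integer divisible by p. Then the exponential sum c_b(m, p^α) := Σ_{y mod p^α, y² ≡ b m² (mod p^α)} e(y/p^α) is zero, where e(x) = exp(2πix). -/
open Complex Finset

/-- `c_b(m, d) = Σ_{y mod d, y² ≡ b m² (mod d)} e(y/d)`. -/
noncomputable def cSum (b m : ℤ) (d : ℕ) : ℂ :=
  ∑ y ∈ Finset.range d,
    if (d : ℤ) ∣ ((y : ℤ) ^ 2 - b * m ^ 2) then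
      Complex.exp (2 * Real.pi * Complex.I * (y : ℂ) / (d : ℂ)) else 0

/-!
Write `α = β + 1` and split `y mod p^α` as `y = p^β j + r` with `r < p^β`, `j < p`. Since
`p² ∣ b m²`, every solution of `y² ≡ b m² (mod p^α)` is divisible by `p`, and then
`y² - r² = (y - r)(y + r)` is divisible by `p^β · p`. So the condition depends only on `r`, and
the sum over `j` is `e(r / p^α)` times the full sum of the `p`-th roots of unity, which vanishes.
-/

theorem Finset.sum_range_mul_eq_sum_sum {M : Type*} [AddCommMonoid M] (f : ℕ → M) (n q : ℕ) :
    ∑ y ∈ range (n * q), f y = ∑ j ∈ range n, ∑ r ∈ range q, f (q * j + r) := by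
  induction n with
  | zero => simp
  | succ n ih => rw [Nat.succ_mul, sum_range_add, ih, sum_range_succ, mul_comm q n]

theorem exp_two_pi_mul_I_mul_div_mul (q n j r : ℕ) (hq : q ≠ 0) (hn : n ≠ 0) :
    exp (2 * Real.pi * I * ↑(q * j + r) / ↑(n * q)) =
      exp (2 * Real.pi * I * r / ↑(n * q)) * exp (2 * Real.pi * I / n) ^ j := by
  rw [← exp_nat_mul, ← exp_add]
  congr 1
  push_cast
  field_simp
  ring

theorem sum_range_ite_exp_eq_zero_of_periodic {n q : ℕ} (hn : 1 < n) (P : ℕ → Prop)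
    [DecidablePred P] (hP : ∀ j r, P (q * j + r) ↔ P r) :
    ∑ y ∈ range (n * q), (if P y then exp (2 * Real.pi * I * y / ↑(n * q)) else 0) = 0 := by
  rw [sum_range_mul_eq_sum_sum, sum_comm]
  refine sum_eq_zero fun r hr => ?_
  by_cases hr' : P r
  · have hq : q ≠ 0 := by rintro rfl; simp at hr
    simp only [hP, if_pos hr', exp_two_pi_mul_I_mul_div_mul q n _ r hq (by omega), ← mul_sum,
      (isPrimitiveRoot_exp n (by omega)).geom_sum_eq_zero hn, mul_zero]
  · simp only [hP, if_neg hr', sum_const_zero]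

theorem pow_succ_dvd_sq_sub_sq {p y r : ℤ} {β : ℕ} (hβ : β ≠ 0) (hyr : p ^ β ∣ y - r)
    (hy : p ∣ y) : p ^ (β + 1) ∣ y ^ 2 - r ^ 2 := by
  have hsum : p ∣ y + r := by
    have := dvd_sub (dvd_mul_of_dvd_right hy 2) ((dvd_pow_self p hβ).trans hyr)
    rwa [show 2 * y - (y - r) = y + r by ring] at this
  rw [sq_sub_sq, pow_succ']
  exact mul_dvd_mul hsum hyr

theorem pow_succ_dvd_sq_sub_of_modEq {p c y r : ℤ} {β : ℕ} (hp : Prime p) (hc : p ^ 2 ∣ c)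
    (hβ : β ≠ 0) (hyr : y ≡ r [ZMOD p ^ β]) (h : p ^ (β + 1) ∣ y ^ 2 - c) :
    p ^ (β + 1) ∣ r ^ 2 - c := by
  have hy : p ∣ y := by
    have hy2 : p ^ 2 ∣ y ^ 2 := by
      simpa using dvd_add ((pow_dvd_pow p (by omega : 2 ≤ β + 1)).trans h) hc
    exact hp.dvd_of_dvd_pow ((dvd_pow_self p two_ne_zero).trans hy2)
  have := dvd_sub h (pow_succ_dvd_sq_sub_sq hβ (Int.ModEq.dvd hyr.symm) hy)
  rwa [sub_sub_sub_cancel_left] at this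

theorem stmt_0_general (p : ℕ) (hp : p.Prime) (α : ℕ) (hα : 2 ≤ α)
    (b m : ℤ) (hm : (p : ℤ) ∣ m) :
    cSum b m (p ^ α) = 0 := by
  obtain ⟨β, rfl⟩ : ∃ β, α = β + 1 := ⟨α - 1, by omega⟩
  have hpZ : Prime (p : ℤ) := Nat.prime_iff_prime_int.mp hp
  have hc : (p : ℤ) ^ 2 ∣ b * m ^ 2 := dvd_mul_of_dvd_right (pow_dvd_pow_of_dvd hm 2) b
  rw [cSum, pow_succ']
  refine sum_range_ite_exp_eq_zero_of_periodic hp.one_lt _ fun j r => ?_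
  have hmod : ((p ^ β * j + r : ℕ) : ℤ) ≡ r [ZMOD (p : ℤ) ^ β] :=
    Int.modEq_iff_dvd.mpr ⟨-j, by push_cast; ring⟩
  have hd : ((p * p ^ β : ℕ) : ℤ) = (p : ℤ) ^ (β + 1) := by push_cast; ring
  rw [hd]
  exact ⟨pow_succ_dvd_sq_sub_of_modEq hpZ hc (by omega) hmod,
    pow_succ_dvd_sq_sub_of_modEq hpZ hc (by omega) hmod.symm⟩

theorem stmt_0 (p : ℕ) (hp : p.Prime) (hodd : Odd p) (α : ℕ) (hα : 2 ≤ α)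
    (b m : ℤ) (hm : (p : ℤ) ∣ m) :
    cSum b m (p ^ α) = 0 :=
  stmt_0_general p hp α hα b m hm
end

section
/- Let p be an odd prime, α ≥ 2 an integer, b an integer, and m an integer coprime to p. If c_b(m, p^α) ≠ 0, then c_b(1, p^α) ≠ 0. -/
/-!
Write `c_b(m, p^α)` as the sum of the standard additive character `ψ` of `ZMod (p^α)` over the
solutions of `y² = b m²`.

If `p ∣ b`, every solution is divisible by `p`, so (as `α ≥ 2`) the solution set is stable
under `y ↦ y + p^(α-1)`; the sum is then fixed by multiplication by `ψ(p^(α-1)) ≠ 1` and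
vanishes.

Otherwise a solution `y` gives a square root `x = y/m` of the unit `b`. In the local ring
`ZMod (p^α)`, where `2` is invertible, the only square roots of `b` are `±x`, so
`c_b(1, p^α) = ψ(x) + ψ(-x)`. This cannot vanish: it would force `ψ(2x) = -1`, hence
`ψ(4x) = 1`, so `x = 0` since `4` is invertible modulo the odd number `p^α`.
-/

open Complex Finset

theorem IsLocalRing.eq_or_eq_neg_of_sq_eq_sq {R : Type*} [CommRing R] [IsLocalRing R] {x z : R}
    (h2 : IsUnit (2 : R)) (hx : IsUnit x) (h : z ^ 2 = x ^ 2) : z = x ∨ z = -x := by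
  have hprod : (z - x) * (z + x) = 0 := by linear_combination h
  have hdiff : IsUnit ((z + x) + -(z - x)) := by convert h2.mul hx using 1; ring
  rcases isUnit_or_isUnit_of_isUnit_add hdiff with hu | hu
  · exact .inl (sub_eq_zero.1 (hu.mul_left_eq_zero.1 hprod))
  · exact .inr (eq_neg_of_add_eq_zero_left ((IsUnit.neg_iff _).1 hu |>.mul_right_eq_zero.1 hprod))

theorem IsLocalRing.sum_filter_sq_eq_sq {R M : Type*} [CommRing R] [IsLocalRing R] [Fintype R]
    [DecidableEq R] [AddCommMonoid M] (f : R → M) {x : R} (h2 : IsUnit (2 : R))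
    (hx : IsUnit x) : ∑ z with z ^ 2 = x ^ 2, f z = f x + f (-x) := by
  have hne : x ≠ -x := fun h ↦ (h2.mul hx).ne_zero (by linear_combination h)
  have hroots : ({z | z ^ 2 = x ^ 2} : Finset R) = {x, -x} := by
    ext z
    simp only [mem_filter, mem_univ, true_and, mem_insert, mem_singleton]
    exact ⟨eq_or_eq_neg_of_sq_eq_sq h2 hx, by rintro (rfl | rfl) <;> simp⟩
  rw [hroots, sum_pair hne]

theorem AddChar.sum_filter_eq_zero_of_add_invariant {G R : Type*} [AddGroup G] [Fintype G]
    [CommRing R] [NoZeroDivisors R] (ψ : AddChar G R) {P : G → Prop} [DecidablePred P] {c : G}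
    (hP : ∀ y, P (y + c) ↔ P y) (hc : ψ c ≠ 1) : ∑ y with P y, ψ y = 0 := by
  have hfix : ∑ y with P y, ψ y = ψ c * ∑ y with P y, ψ y := by
    rw [sum_filter, mul_sum, ← Equiv.sum_comp (Equiv.addRight c)]
    simp only [Equiv.coe_addRight, hP, map_add_eq_mul]
    exact sum_congr rfl fun y _ ↦ by split_ifs <;> ring
  have : (1 - ψ c) * ∑ y with P y, ψ y = 0 := by linear_combination hfix
  exact (mul_eq_zero.1 this).resolve_left (sub_ne_zero.2 hc.symm)

namespace ZMod

theorem isUnit_two_of_odd {N : ℕ} (hN : Odd N) : IsUnit (2 : ZMod N) := by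
  exact_mod_cast (isUnit_iff_coprime 2 N).2 (Nat.coprime_two_left.2 hN)

theorem isUnit_intCast_iff_not_dvd_pow {p k : ℕ} (hp : p.Prime) (hk : k ≠ 0) (a : ℤ) :
    IsUnit (a : ZMod (p ^ k)) ↔ ¬ (p : ℤ) ∣ a := by
  obtain ⟨n, rfl | rfl⟩ := a.eq_nat_or_neg <;>
    simp [isUnit_natCast_iff_not_dvd_pow hp (Nat.pos_of_ne_zero hk), Int.natCast_dvd_natCast]

theorem isLocalRing_primePow {p k : ℕ} (hp : p.Prime) (hk : k ≠ 0) :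
    IsLocalRing (ZMod (p ^ k)) :=
  have : Nontrivial (ZMod (p ^ k)) := nontrivial_iff.2 (Nat.one_lt_pow hk hp.one_lt).ne'
  .of_nonunits_add fun a b ha hb ↦ by
    obtain ⟨a, rfl⟩ := intCast_surjective a
    obtain ⟨b, rfl⟩ := intCast_surjective b
    simp only [mem_nonunits_iff, ← Int.cast_add, isUnit_intCast_iff_not_dvd_pow hp hk,
      not_not] at ha hb ⊢
    exact dvd_add ha hb

theorem intCast_sq_eq_iff (N : ℕ) (k a : ℤ) :
    (k : ZMod N) ^ 2 = a ↔ (N : ℤ) ∣ k ^ 2 - a := by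
  rw [← Int.cast_pow, intCast_eq_intCast_iff_dvd_sub, dvd_sub_comm]

theorem stdAddChar_add_neg_ne_zero {N : ℕ} [NeZero N] (hN : Odd N) (x : ZMod N) :
    stdAddChar x + stdAddChar (-x) ≠ 0 := by
  intro h
  have hinv : stdAddChar x * stdAddChar (-x) = 1 := by
    rw [← AddChar.map_add_eq_mul, add_neg_cancel, AddChar.map_zero_eq_one]
  have hdouble : stdAddChar (x + x) = -1 := by
    rw [AddChar.map_add_eq_mul]; linear_combination stdAddChar x * h - hinv
  have hfour : (2 * 2 : ZMod N) * x = 0 := by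
    apply injective_stdAddChar
    rw [AddChar.map_zero_eq_one, show (2 * 2 : ZMod N) * x = (x + x) + (x + x) by ring,
      AddChar.map_add_eq_mul, hdouble]
    norm_num
  have hx : x = 0 := ((isUnit_two_of_odd hN).mul (isUnit_two_of_odd hN)).mul_right_eq_zero.1 hfour
  rw [hx, add_zero, AddChar.map_zero_eq_one] at hdouble
  norm_num at hdouble

end ZMod

theorem sum_range_eq_sum_zmod {M : Type*} [AddCommMonoid M] (N : ℕ) [NeZero N]
    (f : ZMod N → M) :
    ∑ i ∈ range N, f i = ∑ y : ZMod N, f y :=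
  sum_nbij' (↑) ZMod.val (by simp) (by simp [ZMod.val_lt])
    (fun _ hi ↦ ZMod.val_cast_of_lt (mem_range.1 hi)) (fun y _ ↦ ZMod.natCast_zmod_val y)
    (fun _ _ ↦ rfl)

theorem cSum_eq_sum_stdAddChar (b m : ℤ) (N : ℕ) [NeZero N] :
    cSum b m N = ∑ y : ZMod N with y ^ 2 = ((b * m ^ 2 : ℤ) : ZMod N), ZMod.stdAddChar y := by
  rw [cSum, sum_filter, ← sum_range_eq_sum_zmod]
  refine sum_congr rfl fun y _ ↦ ?_
  have hy : (y : ZMod N) = ((y : ℤ) : ZMod N) := (Int.cast_natCast y).symm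
  refine if_congr ?_ ?_ rfl
  · rw [hy, ZMod.intCast_sq_eq_iff]
  · rw [hy, ZMod.stdAddChar_coe]
    push_cast
    rfl

theorem dvd_sq_add_pow_mul_sub {p : ℤ} (hp : Prime p) {α : ℕ} (hα : 2 ≤ α) {a k : ℤ}
    (ha : p ∣ a) (hk : p ^ α ∣ k ^ 2 - a) (t : ℤ) :
    p ^ α ∣ (k + p ^ (α - 1) * t) ^ 2 - a := by
  have hpk : p ∣ k := hp.dvd_of_dvd_pow (n := 2) <| by
    simpa using dvd_add ((dvd_pow_self p (by omega)).trans hk) ha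
  have hpc : p ∣ p ^ (α - 1) := dvd_pow_self p (by omega)
  have hstep : p ^ α ∣ p ^ (α - 1) * (t * (2 * k + p ^ (α - 1) * t)) := by
    rw [← pow_sub_one_mul (by omega : α ≠ 0)]
    exact mul_dvd_mul_left _ (dvd_mul_of_dvd_right (dvd_add (dvd_mul_of_dvd_right hpk 2)
      (dvd_mul_of_dvd_left hpc t)) t)
  rw [show (k + p ^ (α - 1) * t) ^ 2 - a
      = k ^ 2 - a + p ^ (α - 1) * (t * (2 * k + p ^ (α - 1) * t)) by ring]
  exact dvd_add hk hstep

theorem cSum_eq_zero_of_dvd {p : ℕ} (hp : p.Prime) {α : ℕ} (hα : 2 ≤ α) {b : ℤ}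
    (hb : (p : ℤ) ∣ b) (m : ℤ) : cSum b m (p ^ α) = 0 := by
  have : NeZero (p ^ α) := ⟨pow_ne_zero _ hp.ne_zero⟩
  rw [cSum_eq_sum_stdAddChar]
  refine AddChar.sum_filter_eq_zero_of_add_invariant _
    (c := (((p : ℤ) ^ (α - 1) : ℤ) : ZMod (p ^ α))) ?_ ?_
  · intro y
    obtain ⟨k, rfl⟩ := ZMod.intCast_surjective y
    have hpb : (p : ℤ) ∣ b * m ^ 2 := dvd_mul_of_dvd_left hb _
    have hpZ := Nat.prime_iff_prime_int.mp hp
    rw [← Int.cast_add, ZMod.intCast_sq_eq_iff, ZMod.intCast_sq_eq_iff]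
    push_cast
    refine ⟨fun h ↦ ?_, fun h ↦ by simpa using dvd_sq_add_pow_mul_sub hpZ hα hpb h 1⟩
    simpa using dvd_sq_add_pow_mul_sub hpZ hα hpb h (-1)
  · rw [ne_eq, ← AddChar.map_zero_eq_one (ZMod.stdAddChar (N := p ^ α)),
      ZMod.injective_stdAddChar.eq_iff]
    push_cast
    rw [← Nat.cast_pow, ZMod.natCast_eq_zero_iff, Nat.pow_dvd_pow_iff_le_right hp.one_lt]
    omega

theorem stmt_1 (p : ℕ) (hp : p.Prime) (hodd : Odd p) (α : ℕ) (hα : 2 ≤ α)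
    (b m : ℤ) (hm : ¬ (p : ℤ) ∣ m) (h : cSum b m (p ^ α) ≠ 0) :
    cSum b 1 (p ^ α) ≠ 0 := by
  by_cases hpb : (p : ℤ) ∣ b
  · exact absurd (cSum_eq_zero_of_dvd hp hα hpb m) h
  have : NeZero (p ^ α) := ⟨pow_ne_zero _ hp.ne_zero⟩
  have : IsLocalRing (ZMod (p ^ α)) := ZMod.isLocalRing_primePow hp (by omega)
  have hunit := ZMod.isUnit_intCast_iff_not_dvd_pow hp (by omega : α ≠ 0)
  rw [cSum_eq_sum_stdAddChar] at h ⊢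
  obtain ⟨y, hy, -⟩ := exists_ne_zero_of_sum_ne_zero h
  obtain ⟨u, hu⟩ := (hunit m).2 hm
  set x := y * ↑u⁻¹
  have hx : x ^ 2 = ((b * 1 ^ 2 : ℤ) : ZMod (p ^ α)) := by
    rw [mul_pow, (mem_filter.1 hy).2]
    push_cast
    rw [← hu]
    linear_combination (b : ZMod (p ^ α)) * (↑u * ↑u⁻¹ + 1) * u.mul_inv
  have hxu : IsUnit x := (isUnit_pow_iff two_ne_zero).1 (hx ▸ (hunit _).2 (by simpa using hpb))
  rw [← hx, IsLocalRing.sum_filter_sq_eq_sq _ (ZMod.isUnit_two_of_odd hodd.pow) hxu]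
  exact ZMod.stdAddChar_add_neg_ne_zero hodd.pow x
end

section
/- Let T ≥ 2, y > 0 with y > T, σ ≤ 0, and g(τ) = 2τ log(ey/τ). Then ∫_1^T y^{2σ} τ^{−2σ} e^{ig(τ)} dτ ≪ T^{−2σ} y^{2σ} (1 + |log(y/T)|^{−1}), with an absolute implied constant. -/
/-!
First derivative test. Write the amplitude as `F = φ g'` with `φ = F / g'`; when `F ≥ 0` is
nondecreasing and `g' > 0` is nonincreasing, `φ` is nonnegative and nondecreasing. Integrating
by parts against `(e^{ig})' = i g' e^{ig}`, the boundary terms contribute at most `φ a + φ b` and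
the remaining integral at most the variation `φ b - φ a`, so the integral is at most
`2 F(b) / g'(b)`. For the phase `g(τ) = 2τ log(ey/τ)` one has `g'(τ) = 2 log(y/τ)`, which gives
`T^{-2σ} y^{2σ} / log(y/T)`.
-/

open Real Complex intervalIntegral Set MeasureTheory

theorem norm_integral_mul_deriv_mul_cexp_le {a b : ℝ} {φ φ' g g' : ℝ → ℝ} (hab : a ≤ b)
    (hφ : ∀ t ∈ Icc a b, HasDerivAt φ (φ' t) t) (hφ' : ∀ t ∈ Icc a b, 0 ≤ φ' t)
    (hφa : 0 ≤ φ a) (hg : ∀ t ∈ Icc a b, HasDerivAt g (g' t) t)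
    (hg' : IntervalIntegrable g' volume a b) :
    ‖∫ t in a..b, ((φ t * g' t : ℝ) : ℂ) * cexp (I * g t)‖ ≤ 2 * φ b := by
  rw [← uIcc_of_le hab] at hφ hφ' hg
  set v : ℝ → ℂ := fun t => cexp (I * g t)
  have hv : ∀ t ∈ uIcc a b, HasDerivAt v (v t * (I * g' t)) t := fun t ht =>
    (((hg t ht).ofReal_comp).const_mul I).cexp
  have hv_norm : ∀ t, ‖v t‖ = 1 := fun t => by simp [v, Complex.norm_exp]
  have hv_cont : ContinuousOn v (uIcc a b) := fun t ht => (hv t ht).continuousAt.continuousWithinAt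
  have hφ'_int : IntervalIntegrable φ' volume a b :=
    intervalIntegrable_deriv_of_nonneg (fun t ht => (hφ t ht).continuousAt.continuousWithinAt)
      (fun t ht => hφ t (Ioo_subset_Icc_self ht)) (fun t ht => hφ' t (Ioo_subset_Icc_self ht))
  have hg'_int : IntervalIntegrable (fun t => (g' t : ℂ)) volume a b :=
    ⟨hg'.1.ofReal, hg'.2.ofReal⟩
  have hibp := integral_mul_deriv_eq_deriv_mul (u := fun t => (φ t : ℂ))
    (fun t ht => (hφ t ht).ofReal_comp) hv ⟨hφ'_int.1.ofReal, hφ'_int.2.ofReal⟩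
    ((hg'_int.const_mul I).continuousOn_mul hv_cont)
  have hftc : ∫ t in a..b, φ' t = φ b - φ a := integral_eq_sub_of_hasDerivAt hφ hφ'_int
  have hφb : 0 ≤ φ b := by
    have : 0 ≤ ∫ t in a..b, φ' t :=
      integral_nonneg hab fun t ht => hφ' t (by rwa [uIcc_of_le hab])
    linarith
  have herr : ‖∫ t in a..b, (φ' t : ℂ) * v t‖ ≤ φ b - φ a := calc
    _ ≤ ∫ t in a..b, ‖(φ' t : ℂ) * v t‖ := norm_integral_le_integral_norm hab
    _ = ∫ t in a..b, φ' t := integral_congr fun t ht => by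
          simp [hv_norm, abs_of_nonneg (hφ' t ht)]
    _ = φ b - φ a := hftc
  have hintegrand : (fun t => ((φ t * g' t : ℝ) : ℂ) * cexp (I * g t)) =
      fun t => -I * ((φ t : ℂ) * (v t * (I * g' t))) := funext fun t => by
    push_cast; linear_combination ((φ t : ℂ) * g' t * v t) * I_mul_I
  calc ‖∫ t in a..b, ((φ t * g' t : ℝ) : ℂ) * cexp (I * g t)‖
      = ‖∫ t in a..b, (φ t : ℂ) * (v t * (I * g' t))‖ := by
        rw [hintegrand, intervalIntegral.integral_const_mul, norm_mul, norm_neg, norm_I, one_mul]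
    _ ≤ ‖(φ b : ℂ) * v b‖ + ‖(φ a : ℂ) * v a‖ + ‖∫ t in a..b, (φ' t : ℂ) * v t‖ := by
        rw [hibp]; exact norm_sub_le_of_le (norm_sub_le _ _) le_rfl
    _ ≤ φ b + φ a + (φ b - φ a) := by
        simp only [norm_mul, hv_norm, mul_one, norm_real, Real.norm_eq_abs, abs_of_nonneg hφa,
          abs_of_nonneg hφb]
        linarith
    _ = 2 * φ b := by ring

theorem norm_integral_mul_cexp_le_of_deriv_pos {a b : ℝ} {F F' g g' g'' : ℝ → ℝ} (hab : a ≤ b)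
    (hF : ∀ t ∈ Icc a b, HasDerivAt F (F' t) t) (hF_nonneg : ∀ t ∈ Icc a b, 0 ≤ F t)
    (hF' : ∀ t ∈ Icc a b, 0 ≤ F' t) (hg : ∀ t ∈ Icc a b, HasDerivAt g (g' t) t)
    (hg' : ∀ t ∈ Icc a b, HasDerivAt g' (g'' t) t) (hg'_pos : ∀ t ∈ Icc a b, 0 < g' t)
    (hg'' : ∀ t ∈ Icc a b, g'' t ≤ 0) :
    ‖∫ t in a..b, (F t : ℂ) * cexp (I * g t)‖ ≤ 2 * (F b / g' b) := by
  have hab' : a ∈ Icc a b := left_mem_Icc.2 hab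
  have hg'_cont : ContinuousOn g' (uIcc a b) := fun t ht =>
    (hg' t (by rwa [uIcc_of_le hab] at ht)).continuousAt.continuousWithinAt
  have hF_eq : ∀ t ∈ uIcc a b, (F t : ℂ) * cexp (I * g t) =
      ((F t / g' t * g' t : ℝ) : ℂ) * cexp (I * g t) := fun t ht => by
    rw [div_mul_cancel₀ _ (hg'_pos t (by rwa [uIcc_of_le hab] at ht)).ne']
  rw [integral_congr hF_eq]
  refine norm_integral_mul_deriv_mul_cexp_le hab (φ := fun t => F t / g' t)
    (fun t ht => (hF t ht).div (hg' t ht) (hg'_pos t ht).ne') (fun t ht => ?_)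
    (div_nonneg (hF_nonneg a hab') (hg'_pos a hab').le) hg hg'_cont.intervalIntegrable
  have : 0 ≤ F' t * g' t - F t * g'' t :=
    sub_nonneg.2 ((mul_nonpos_of_nonneg_of_nonpos (hF_nonneg t ht) (hg'' t ht)).trans
      (mul_nonneg (hF' t ht) (hg'_pos t ht).le))
  positivity

theorem hasDerivAt_log_div {y t : ℝ} (hy : y ≠ 0) (ht : t ≠ 0) :
    HasDerivAt (fun τ => Real.log (y / τ)) (-t⁻¹) t := by
  refine (((hasDerivAt_inv ht).const_mul y).log (mul_ne_zero hy (inv_ne_zero ht))).congr_deriv ?_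
  field_simp

theorem hasDerivAt_two_mul_mul_log_exp_one_mul_div {y t : ℝ} (hy : y ≠ 0) (ht : t ≠ 0) :
    HasDerivAt (fun τ => 2 * τ * Real.log (Real.exp 1 * y / τ)) (2 * Real.log (y / t)) t := by
  have hfun : (fun τ => 2 * τ * Real.log (Real.exp 1 * y / τ)) =
      fun τ => 2 * τ * (1 + Real.log (y / τ)) := by
    funext τ
    rcases eq_or_ne τ 0 with rfl | hτ
    · simp
    · rw [mul_div_assoc, Real.log_mul (Real.exp_ne_zero 1) (div_ne_zero hy hτ), Real.log_exp]
  rw [hfun]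
  refine (((hasDerivAt_id' t).const_mul 2).fun_mul
    ((hasDerivAt_log_div hy ht).const_add 1)).congr_deriv ?_
  field_simp
  ring

theorem stmt_16 :
    ∃ K : ℝ, 0 < K ∧ ∀ T y σ : ℝ, 2 ≤ T → T < y → σ ≤ 0 →
      ‖∫ τ in (1 : ℝ)..T,
          ((y ^ (2 * σ) * τ ^ (-(2 * σ)) : ℝ) : ℂ) *
            Complex.exp (Complex.I * ((2 * τ * Real.log (Real.exp 1 * y / τ) : ℝ) : ℂ))‖
        ≤ K * T ^ (-(2 * σ)) * y ^ (2 * σ) * (1 + |Real.log (y / T)|⁻¹) := by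
  refine ⟨1, one_pos, fun T y σ hT hTy hσ => ?_⟩
  have hy : 0 < y := by linarith
  have hpos : ∀ t ∈ Icc 1 T, 0 < t := fun t ht => by linarith [ht.1]
  have hlog_pos : ∀ t ∈ Icc 1 T, 0 < Real.log (y / t) := fun t ht =>
    Real.log_pos ((one_lt_div (hpos t ht)).2 (by linarith [ht.2]))
  have hbound := norm_integral_mul_cexp_le_of_deriv_pos (by linarith : (1 : ℝ) ≤ T)
    (F := fun τ => y ^ (2 * σ) * τ ^ (-(2 * σ)))
    (F' := fun τ => y ^ (2 * σ) * (-(2 * σ) * τ ^ (-(2 * σ) - 1)))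
    (g' := fun τ => 2 * Real.log (y / τ)) (g'' := fun τ => 2 * -τ⁻¹)
    (fun t ht => (Real.hasDerivAt_rpow_const (Or.inl (hpos t ht).ne')).const_mul _)
    (fun t ht => by have := hpos t ht; positivity)
    (fun t ht => mul_nonneg (by positivity) (mul_nonneg (by linarith) (by
      have := hpos t ht; positivity)))
    (fun t ht => hasDerivAt_two_mul_mul_log_exp_one_mul_div hy.ne' (hpos t ht).ne')
    (fun t ht => (hasDerivAt_log_div hy.ne' (hpos t ht).ne').const_mul 2)
    (fun t ht => mul_pos two_pos (hlog_pos t ht))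
    (fun t ht => by have := hpos t ht; simp only [mul_neg, neg_nonpos]; positivity)
  have hL := hlog_pos T (right_mem_Icc.2 (by linarith))
  calc _ ≤ 2 * (y ^ (2 * σ) * T ^ (-(2 * σ)) / (2 * Real.log (y / T))) := hbound
    _ = 1 * T ^ (-(2 * σ)) * y ^ (2 * σ) * |Real.log (y / T)|⁻¹ := by
        rw [abs_of_pos hL]; field_simp
    _ ≤ 1 * T ^ (-(2 * σ)) * y ^ (2 * σ) * (1 + |Real.log (y / T)|⁻¹) := by
        gcongr; exact le_add_of_nonneg_left zero_le_one
end
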